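/- arXiv:1504.07555 — 5 statements merged into one kernel-verified Lean document; each statement's English description precedes it below -/
import Mathlib

section
/- Let κ > 0, γ > 0 and δ ∈ ℝ with δ > −κ/γ and δ ≠ 0, and set δ₀ := δ if δ > 0 and δ₀ := κ/γ if −κ/γ < δ < 0. Then there exists ε₁ > 0 such that for every real g with 0 ≤ g ≤ γ and all z₁, z₂ ∈ ℝ one has g·z₁² − (δ₀ − δ)·g·z₁·z₂ + δ₀·κ·z₂² ≥ ε₁·(g·z₁² + z₂²). -/
/-!
Subtracting `ε (g z₁² + z₂²)` leaves the form `(1 - ε) g z₁² - c g z₁ z₂ + (d - ε) z₂²` with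
`c = δ₀ - δ`, `d = δ₀ κ`, whose discriminant condition `c² g ≤ 4 (1 - ε) (d - ε)` holds for all
`g ≤ γ` and small `ε > 0` as soon as `c² γ < 4 d`. For `δ > 0` this is `0 < 4 δ κ`; for `δ < 0`
it reads `(κ - δ γ)² < 4 κ²`, i.e. exactly `-κ < δ γ`.
-/

open Filter Topology

lemma mul_sq_sub_mul_add_nonneg {a c e g : ℝ} (x y : ℝ) (ha : 0 < a) (hg : 0 ≤ g)
    (h : c ^ 2 * g ≤ 4 * a * e) :
    0 ≤ a * g * x ^ 2 - c * g * x * y + e * y ^ 2 := by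
  have hsum : 4 * a * (a * g * x ^ 2 - c * g * x * y + e * y ^ 2) =
      g * (2 * a * x - c * y) ^ 2 + (4 * a * e - c ^ 2 * g) * y ^ 2 := by ring
  have : 0 ≤ 4 * a * (a * g * x ^ 2 - c * g * x * y + e * y ^ 2) := by
    rw [hsum]
    have := sub_nonneg.mpr h
    positivity
  exact nonneg_of_mul_nonneg_right this (by positivity)

lemma exists_pos_le_mul_sq_sub_mul_add {γ c d : ℝ} (hdisc : c ^ 2 * γ < 4 * d) :
    ∃ ε > 0, ∀ g : ℝ, 0 ≤ g → g ≤ γ → ∀ x y : ℝ,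
      g * x ^ 2 - c * g * x * y + d * y ^ 2 ≥ ε * (g * x ^ 2 + y ^ 2) := by
  have hlim : Tendsto (fun ε : ℝ => 4 * (1 - ε) * (d - ε)) (𝓝 0) (𝓝 (4 * d)) := by
    have hcont : Continuous fun ε : ℝ => 4 * (1 - ε) * (d - ε) := by fun_prop
    simpa using hcont.tendsto 0
  obtain ⟨ε, hε, hdiscε, hε1⟩ := Eventually.exists_gt
    ((hlim.eventually_const_lt hdisc).and (eventually_lt_nhds one_pos))
  refine ⟨ε, hε, fun g hg hgγ x y => ?_⟩
  have hdiscg : c ^ 2 * g ≤ 4 * (1 - ε) * (d - ε) :=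
    (mul_le_mul_of_nonneg_left hgγ (sq_nonneg c)).trans hdiscε.le
  have := mul_sq_sub_mul_add_nonneg x y (sub_pos.mpr hε1) hg hdiscg
  linarith

theorem stmt_0_general (κ γ δ δ₀ : ℝ) (hκ : 0 < κ) (hγ : 0 < γ)
    (hδ : -κ / γ < δ)
    (hδ₀ : δ₀ = if 0 < δ then δ else κ / γ) :
    ∃ ε₁ > 0, ∀ g : ℝ, 0 ≤ g → g ≤ γ → ∀ z₁ z₂ : ℝ,
      g * z₁ ^ 2 - (δ₀ - δ) * g * z₁ * z₂ + δ₀ * κ * z₂ ^ 2 ≥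
        ε₁ * (g * z₁ ^ 2 + z₂ ^ 2) := by
  refine exists_pos_le_mul_sq_sub_mul_add ?_
  split_ifs at hδ₀ with hpos <;> subst hδ₀
  · simpa using mul_pos hpos hκ
  · have hδγ : -κ < δ * γ := by linarith [(div_lt_iff₀ hγ).mp hδ]
    have hlhs : (κ / γ - δ) ^ 2 * γ = (κ - δ * γ) ^ 2 / γ := by field_simp
    have hrhs : 4 * (κ / γ * κ) = 4 * κ ^ 2 / γ := by ring
    rw [hlhs, hrhs, div_lt_div_iff_of_pos_right hγ]
    nlinarith [mul_nonpos_of_nonpos_of_nonneg (not_lt.mp hpos) hγ.le]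

/-- Lemma 3.1 (algebraic core): positive definiteness of the quadratic form of the
entropy-variable diffusion matrix `B(w)`. -/
theorem stmt_0 (κ γ δ δ₀ : ℝ) (hκ : 0 < κ) (hγ : 0 < γ)
    (hδ : -κ / γ < δ) (hδne : δ ≠ 0)
    (hδ₀ : δ₀ = if 0 < δ then δ else κ / γ) :
    ∃ ε₁ > 0, ∀ g : ℝ, 0 ≤ g → g ≤ γ → ∀ z₁ z₂ : ℝ,
      g * z₁ ^ 2 - (δ₀ - δ) * g * z₁ * z₂ + δ₀ * κ * z₂ ^ 2 ≥
        ε₁ * (g * z₁ ^ 2 + z₂ ^ 2) :=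
  stmt_0_general κ γ δ δ₀ hκ hγ hδ hδ₀
end

section
/- Let κ > 0, γ > 0 and −κ/γ < δ < 0. Set ε₀ := (1/2)·(1 − (1/4)·(1 − γδ/κ)²) and ε₁ := min{ε₀, (κ² − (κ − γδ)²/(4·(1 − ε₀)))/γ}. Then ε₀ > 0 and ε₁ > 0, and for every real g with 0 ≤ g ≤ γ and all z₁, z₂ ∈ ℝ one has g·z₁² − (κ/γ − δ)·g·z₁·z₂ + (κ²/γ)·z₂² ≥ ε₁·(g·z₁² + z₂²). -/
set_option maxHeartbeats 1000000 in
/-- Lemma 3.1, destabilizing regime `-κ/γ < δ < 0`, with the explicit constants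
`ε₀` and `ε₁` from the proof. -/
theorem stmt_1 (κ γ δ ε₀ ε₁ : ℝ) (hκ : 0 < κ) (hγ : 0 < γ)
    (hδ1 : -κ / γ < δ) (hδ2 : δ < 0)
    (hε₀ : ε₀ = (1 / 2) * (1 - (1 / 4) * (1 - γ * δ / κ) ^ 2))
    (hε₁ : ε₁ = min ε₀ ((κ ^ 2 - (κ - γ * δ) ^ 2 / (4 * (1 - ε₀))) / γ)) :
    0 < ε₀ ∧ 0 < ε₁ ∧
    ∀ g : ℝ, 0 ≤ g → g ≤ γ → ∀ z₁ z₂ : ℝ,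
      g * z₁ ^ 2 - (κ / γ - δ) * g * z₁ * z₂ + (κ ^ 2 / γ) * z₂ ^ 2 ≥
        ε₁ * (g * z₁ ^ 2 + z₂ ^ 2) := by
  have hκ' : κ ≠ 0 := hκ.ne'
  have hγ' : γ ≠ 0 := hγ.ne'
  have h1 : 0 < κ - γ * δ := by nlinarith
  have hlt : -κ < γ * δ := by
    have h := hδ1
    rw [div_lt_iff₀ hγ] at h
    nlinarith
  have h2 : κ - γ * δ < 2 * κ := by linarith
  have hP : (κ - γ * δ) ^ 2 < 4 * κ ^ 2 := by nlinarith
  have heqs : 1 - γ * δ / κ = (κ - γ * δ) / κ := by field_simp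
  have hε₀κ : (1 - ε₀) * κ ^ 2 = κ ^ 2 / 2 + (κ - γ * δ) ^ 2 / 8 := by
    rw [hε₀, heqs, div_pow]; field_simp; ring
  have hε₀pos : 0 < ε₀ := by
    rw [hε₀, heqs, div_pow]
    have h4 : (κ - γ * δ) ^ 2 / κ ^ 2 < 4 := by
      rw [div_lt_iff₀ (by positivity)]; nlinarith
    nlinarith
  have h1ε : (0:ℝ) < 1 - ε₀ := by nlinarith [sq_nonneg (κ - γ * δ), sq_nonneg κ, hε₀κ]
  have hEkey : (κ - γ * δ) ^ 2 < 4 * (1 - ε₀) * κ ^ 2 := by nlinarith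
  have hEpos : 0 < (κ ^ 2 - (κ - γ * δ) ^ 2 / (4 * (1 - ε₀))) / γ := by
    apply div_pos _ hγ
    have : (κ - γ * δ) ^ 2 / (4 * (1 - ε₀)) < κ ^ 2 := by
      rw [div_lt_iff₀ (by positivity)]; nlinarith
    linarith
  have hε₁pos : 0 < ε₁ := by rw [hε₁]; exact lt_min hε₀pos hEpos
  refine ⟨hε₀pos, hε₁pos, ?_⟩
  intro g hg0 hg1 z₁ z₂
  have hε₁le₀ : ε₁ ≤ ε₀ := by rw [hε₁]; exact min_le_left _ _
  have hε₁leE : ε₁ ≤ (κ ^ 2 - (κ - γ * δ) ^ 2 / (4 * (1 - ε₀))) / γ := by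
    rw [hε₁]; exact min_le_right _ _
  -- C := κ²/γ - ε₁ ≥ (κ-γδ)²/(4(1-ε₀)γ)
  have hC : (κ - γ * δ) ^ 2 / (4 * (1 - ε₀) * γ) ≤ κ ^ 2 / γ - ε₁ := by
    have : (κ ^ 2 - (κ - γ * δ) ^ 2 / (4 * (1 - ε₀))) / γ
        = κ ^ 2 / γ - (κ - γ * δ) ^ 2 / (4 * (1 - ε₀) * γ) := by
      field_simp
    linarith [hε₁leE, this ▸ hε₁leE]
  have hCpos : 0 < κ ^ 2 / γ - ε₁ := lt_of_lt_of_le (by positivity) hC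
  obtain ⟨A, hA⟩ : ∃ A : ℝ, A = (1 - ε₁) * g := ⟨_, rfl⟩
  obtain ⟨B, hB⟩ : ∃ B : ℝ, B = ((κ - γ * δ) / γ) * g := ⟨_, rfl⟩
  obtain ⟨C, hCdef⟩ : ∃ C : ℝ, C = κ ^ 2 / γ - ε₁ := ⟨_, rfl⟩
  rw [← hCdef] at hC hCpos
  have hAnn : 0 ≤ A := hA ▸ mul_nonneg (by nlinarith) hg0
  -- discriminant: B² ≤ 4 A C
  have hdisc : B ^ 2 ≤ 4 * A * C := by
    have hB2 : B ^ 2 = (κ - γ * δ) ^ 2 * g ^ 2 / γ ^ 2 := by rw [hB]; ring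
    have hstep1 : (κ - γ * δ) ^ 2 * g ^ 2 / γ ^ 2 ≤ (κ - γ * δ) ^ 2 * g / γ := by
      rw [div_le_div_iff₀ (by positivity) hγ]
      nlinarith [mul_nonneg (mul_nonneg (sq_nonneg (κ - γ * δ)) hγ.le)
        (mul_nonneg hg0 (by linarith : (0:ℝ) ≤ γ - g))]
    have hstep2 : (κ - γ * δ) ^ 2 * g / γ ≤ 4 * A * C := by
      have hAC : 4 * ((1 - ε₀) * g) * ((κ - γ * δ) ^ 2 / (4 * (1 - ε₀) * γ))
          = (κ - γ * δ) ^ 2 * g / γ := by field_simp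
      have hAge : (1 - ε₀) * g ≤ A := by
        rw [hA]; apply mul_le_mul_of_nonneg_right (by linarith) hg0
      calc (κ - γ * δ) ^ 2 * g / γ
          = 4 * ((1 - ε₀) * g) * ((κ - γ * δ) ^ 2 / (4 * (1 - ε₀) * γ)) := hAC.symm
        _ ≤ 4 * ((1 - ε₀) * g) * C := by
            apply mul_le_mul_of_nonneg_left hC (by positivity)
        _ ≤ 4 * A * C := by
            have := mul_le_mul_of_nonneg_right hAge (le_of_lt hCpos)
            nlinarith
    linarith [hB2 ▸ hstep1]
  -- reduce goal to A z₁² - B z₁ z₂ + C z₂² ≥ 0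
  have hgoal : A * z₁ ^ 2 - B * z₁ * z₂ + C * z₂ ^ 2 ≥ 0 := by
    nlinarith [sq_nonneg (B * z₁ - 2 * C * z₂),
      mul_nonneg (by linarith : (0:ℝ) ≤ 4 * A * C - B ^ 2) (sq_nonneg z₁), hCpos]
  have hBeq : (κ / γ - δ) = (κ - γ * δ) / γ := by field_simp
  have hkey : g * z₁ ^ 2 - (κ / γ - δ) * g * z₁ * z₂ + (κ ^ 2 / γ) * z₂ ^ 2
      - ε₁ * (g * z₁ ^ 2 + z₂ ^ 2) = A * z₁ ^ 2 - B * z₁ * z₂ + C * z₂ ^ 2 := by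
    rw [hA, hB, hCdef, hBeq]; ring
  linarith [hgoal, hkey]
end

section
/- Let κ > 0, γ > 0 and δ ∈ ℝ with δ > −κ/γ and δ ≠ 0, and set δ₀ := δ if δ > 0 and δ₀ := κ/γ if −κ/γ < δ < 0. Then there exists ε₁ > 0 such that for every real g with 0 < g ≤ γ, every dimension d ≥ 1 and all vectors p, q ∈ ℝᵈ one has ‖p‖²/g + (δ/δ₀ − 1)·⟨p, q⟩ + (κ/δ₀)·‖q‖² ≥ ε₁·(‖p‖²/g + ‖q‖²/δ₀²), where ⟨·,·⟩ is the Euclidean inner product. -/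
/-!
Write `A = ‖p‖²/g` and `s = δ/δ₀ ∈ (-1, 1]`. Since `κ/δ₀ = κδ₀ · δ₀⁻²`, the claim follows from
`A + (s - 1)⟪p, q⟫ + (κ/δ₀)‖q‖² ≥ (1 + s)/2 · (A + (κ/δ₀)‖q‖²)` with `ε₁ = (1 + s)/2 · min 1 (κδ₀)`.
For `δ > 0` we have `s = 1` and the cross term vanishes; for `δ < 0` we have `κ/δ₀ = γ ≥ g`, and the
cross term is absorbed by the weighted Cauchy–Schwarz inequality `⟪p, q⟫ ≤ (‖p‖²/g + g‖q‖²)/2`.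
-/

open RealInnerProductSpace

lemma min_one_mul_add_le {α : Type*} [Semiring α] [LinearOrder α] [IsOrderedRing α]
    {x y l : α} (hx : 0 ≤ x) (hy : 0 ≤ y) : min 1 l * (x + y) ≤ x + l * y := by
  rw [mul_add]
  gcongr
  · exact (mul_le_mul_of_nonneg_right (min_le_left 1 l) hx).trans_eq (one_mul x)
  · exact min_le_right 1 l

section InnerProduct

variable {E : Type*} [NormedAddCommGroup E] [InnerProductSpace ℝ E]

lemma real_inner_le_half_norm_sq_div_add {t : ℝ} (ht : 0 < t) (p q : E) :
    ⟪p, q⟫ ≤ (‖p‖ ^ 2 / t + t * ‖q‖ ^ 2) / 2 := by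
  have hmul : 2 * t * (‖p‖ * ‖q‖) ≤ ‖p‖ ^ 2 + t ^ 2 * ‖q‖ ^ 2 := by
    nlinarith [sq_nonneg (‖p‖ - t * ‖q‖)]
  calc ⟪p, q⟫ ≤ ‖p‖ * ‖q‖ := real_inner_le_norm p q
    _ ≤ (‖p‖ ^ 2 / t + t * ‖q‖ ^ 2) / 2 := by
      rw [div_add' _ _ _ ht.ne', div_div, le_div_iff₀ (by positivity)]
      linarith

lemma half_mul_le_add_inner_add {g t s : ℝ} (hg : 0 < g) (hs : s ≤ 1) (hst : s = 1 ∨ g ≤ t)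
    (p q : E) :
    (1 + s) / 2 * (‖p‖ ^ 2 / g + t * ‖q‖ ^ 2) ≤ ‖p‖ ^ 2 / g + (s - 1) * ⟪p, q⟫ + t * ‖q‖ ^ 2 := by
  rcases hst with rfl | hgt
  · norm_num
  have hinner : ⟪p, q⟫ ≤ (‖p‖ ^ 2 / g + t * ‖q‖ ^ 2) / 2 := by
    refine (real_inner_le_half_norm_sq_div_add hg p q).trans ?_
    gcongr
  nlinarith

end InnerProduct

lemma delta0_spec {κ γ δ : ℝ} (hκ : 0 < κ) (hγ : 0 < γ) (hδ : -κ / γ < δ) (hδne : δ ≠ 0) :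
    let δ₀ := if 0 < δ then δ else κ / γ
    0 < δ₀ ∧ -1 < δ / δ₀ ∧ δ / δ₀ ≤ 1 ∧ (δ / δ₀ = 1 ∨ γ ≤ κ / δ₀) := by
  intro δ₀
  by_cases hpos : 0 < δ
  · simp only [δ₀, if_pos hpos, div_self hδne]
    norm_num [hpos]
  · have hneg : δ < 0 := lt_of_le_of_ne (not_lt.mp hpos) hδne
    have hδγ : -κ < δ * γ := (div_lt_iff₀ hγ).mp hδ
    simp only [δ₀, if_neg hpos, div_div_eq_mul_div, mul_div_cancel_left₀ _ hκ.ne']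
    refine ⟨by positivity, ?_, ?_, Or.inr le_rfl⟩
    · rw [lt_div_iff₀ hκ]
      linarith
    · rw [div_le_one hκ]
      nlinarith

/-- The gradient-form consequence (ex.wBw)/(1.eps1) of Lemma 3.1. -/
theorem stmt_3 (κ γ δ δ₀ : ℝ) (hκ : 0 < κ) (hγ : 0 < γ)
    (hδ : -κ / γ < δ) (hδne : δ ≠ 0)
    (hδ₀ : δ₀ = if 0 < δ then δ else κ / γ) :
    ∃ ε₁ > 0, ∀ g : ℝ, 0 < g → g ≤ γ → ∀ d : ℕ, 1 ≤ d →
      ∀ p q : EuclideanSpace ℝ (Fin d),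
        ‖p‖ ^ 2 / g + (δ / δ₀ - 1) * (inner ℝ p q : ℝ) + (κ / δ₀) * ‖q‖ ^ 2 ≥
          ε₁ * (‖p‖ ^ 2 / g + ‖q‖ ^ 2 / δ₀ ^ 2) := by
  obtain ⟨hδ₀pos, hs, hs1, hst⟩ := hδ₀ ▸ delta0_spec hκ hγ hδ hδne
  have hs' : 0 < (1 + δ / δ₀) / 2 := by linarith
  refine ⟨(1 + δ / δ₀) / 2 * min 1 (κ * δ₀), by positivity, fun g hg hgγ d _ p q => ?_⟩
  have hscale : κ / δ₀ * ‖q‖ ^ 2 = κ * δ₀ * (‖q‖ ^ 2 / δ₀ ^ 2) := by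
    field_simp
  calc (1 + δ / δ₀) / 2 * min 1 (κ * δ₀) * (‖p‖ ^ 2 / g + ‖q‖ ^ 2 / δ₀ ^ 2)
      ≤ (1 + δ / δ₀) / 2 * (‖p‖ ^ 2 / g + κ / δ₀ * ‖q‖ ^ 2) := by
        rw [mul_assoc, hscale]
        gcongr
        exact min_one_mul_add_le (by positivity) (by positivity)
    _ ≤ _ := half_mul_le_add_inner_add hg hs1 (hst.imp_right hgγ.trans) p q
end

section
/- Let κ > 0, α > 0, μ > 0, g* > 0 and f* ∈ ℝ, and set δ_b := −κ/g* + (1/μ)·(f* − α/g*). Then the inhomogeneous linear system P − g*·Q = −g*, (f* − δ_b·μ)·P − (κμ + α)·Q = 0 has no solution (P, Q) ∈ ℝ². -/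
/-- Transversality condition (L6) of Lemma 4.2: the projected inhomogeneous system
(PQ) has no solution. -/
theorem stmt_11 (κ α μ gs fs : ℝ) (hκ : 0 < κ) (hα : 0 < α) (hμ : 0 < μ)
    (hgs : 0 < gs)
    (δb : ℝ) (hδb : δb = -κ / gs + (1 / μ) * (fs - α / gs)) :
    ¬ ∃ P Q : ℝ, P - gs * Q = -gs ∧ (fs - δb * μ) * P - (κ * μ + α) * Q = 0 := by
  rintro ⟨P, Q, h1, h2⟩
  have hg : gs ≠ 0 := ne_of_gt hgs
  have hm : μ ≠ 0 := ne_of_gt hμ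
  have hc : fs - δb * μ = (κ * μ + α) / gs := by
    rw [hδb]; field_simp; ring
  rw [hc] at h2
  have hpos : 0 < κ * μ + α := by positivity
  have hPQ : P = gs * Q := by
    have h2' : (κ * μ + α) * P = (κ * μ + α) * (gs * Q) := by
      field_simp at h2; linarith
    exact mul_left_cancel₀ (ne_of_gt hpos) h2'
  rw [hPQ] at h1
  nlinarith
end

section
/- Let κ > 0, γ > 0, c_L > 0, c_S > 0 and let δ ∈ ℝ with δ > −κ/γ and δ ≠ 0; set δ₀ := δ if δ > 0 and δ₀ := κ/γ if −κ/γ < δ < 0, and let ε₁(δ) := min{1, δκ} if δ > 0 and ε₁(δ) := min{ε₀(δ), (κ² − (κ − γδ)²/(4·(1 − ε₀(δ))))/γ} with ε₀(δ) := (1/2)·(1 − (1/4)·(1 − γδ/κ)²) if δ < 0. Then ε₁(δ) > 0, and there exists α₀ > 0 such that for every α ≥ α₀ the decay condition δ₀·ε₁(δ) > (γ/α)·c_L²·c_S holds and the decay rate χ(δ) := min{ε₁(δ)/c_S − γ·c_L²/(α·δ₀), α} is strictly positive. -/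
/-- Claim (M3): for every fixed `δ > δ* = -κ/γ`, `δ ≠ 0`, the decay condition (1.eps2)
holds and the decay rate `χ(δ)` is positive once the damping `α` is large enough. -/
theorem stmt_18 (κ γ c_L c_S δ δ₀ ε₀ ε₁ : ℝ) (hκ : 0 < κ) (hγ : 0 < γ)
    (hcL : 0 < c_L) (hcS : 0 < c_S) (hδ : -κ / γ < δ) (hδne : δ ≠ 0)
    (hδ₀ : δ₀ = if 0 < δ then δ else κ / γ)
    (hε₀ : ε₀ = (1 / 2) * (1 - (1 / 4) * (1 - γ * δ / κ) ^ 2))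
    (hε₁ : ε₁ = if 0 < δ then min 1 (δ * κ)
      else min ε₀ ((κ ^ 2 - (κ - γ * δ) ^ 2 / (4 * (1 - ε₀))) / γ)) :
    0 < ε₁ ∧ ∃ α₀ > 0, ∀ α ≥ α₀,
      δ₀ * ε₁ > (γ / α) * c_L ^ 2 * c_S ∧
      0 < min (ε₁ / c_S - γ * c_L ^ 2 / (α * δ₀)) α := by
  have hu : -κ < γ * δ := by
    have h := (div_lt_iff₀ hγ).mp hδ
    nlinarith [h]
  have hδ₀pos : 0 < δ₀ := by
    rw [hδ₀]; split_ifs with h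
    · exact h
    · positivity
  have hε₁pos : 0 < ε₁ := by
    rw [hε₁]; split_ifs with h
    · exact lt_min one_pos (mul_pos h hκ)
    · have hδneg : δ < 0 := lt_of_le_of_ne (not_lt.mp h) hδne
      have huneg : γ * δ < 0 := mul_neg_of_pos_of_neg hγ hδneg
      have hrw : (1 - γ * δ / κ) ^ 2 = (κ - γ * δ) ^ 2 / κ ^ 2 := by
        field_simp
      have hA1 : κ ^ 2 < (κ - γ * δ) ^ 2 := by nlinarith
      have hA2 : (κ - γ * δ) ^ 2 < 4 * κ ^ 2 := by nlinarith
      have hε₀pos : 0 < ε₀ := by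
        rw [hε₀, hrw]
        have : (κ - γ * δ) ^ 2 / κ ^ 2 < 4 := by
          rw [div_lt_iff₀ (by positivity)]; linarith
        nlinarith
      have h1e : 0 < 1 - ε₀ := by
        rw [hε₀, hrw]
        have : 0 < (κ - γ * δ) ^ 2 / κ ^ 2 := div_pos (by nlinarith) (by positivity)
        nlinarith
      have hkey : (κ - γ * δ) ^ 2 / (4 * (1 - ε₀)) < κ ^ 2 := by
        rw [div_lt_iff₀ (by positivity)]
        have he : 1 - ε₀ = 1 / 2 + (κ - γ * δ) ^ 2 / (8 * κ ^ 2) := by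
          rw [hε₀, hrw]; ring
        rw [he]
        have : (κ - γ * δ) ^ 2 / (8 * κ ^ 2) * κ ^ 2 = (κ - γ * δ) ^ 2 / 8 := by
          field_simp
        nlinarith
      exact lt_min hε₀pos (div_pos (by linarith) hγ)
  refine ⟨hε₁pos, max 1 (2 * γ * c_L ^ 2 * c_S / (δ₀ * ε₁)), lt_of_lt_of_le one_pos (le_max_left _ _), ?_⟩
  intro α hα
  have hα1 : 1 ≤ α := le_trans (le_max_left _ _) hα
  have hαpos : 0 < α := by linarith
  have hM : 2 * γ * c_L ^ 2 * c_S / (δ₀ * ε₁) ≤ α := le_trans (le_max_right _ _) hα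
  have hprod : 2 * γ * c_L ^ 2 * c_S ≤ α * (δ₀ * ε₁) := by
    rw [div_le_iff₀ (by positivity)] at hM; linarith
  have hMpos : 0 < γ * c_L ^ 2 * c_S := by positivity
  constructor
  · rw [gt_iff_lt, div_mul_eq_mul_div, div_mul_eq_mul_div, div_lt_iff₀ hαpos]
    nlinarith
  · refine lt_min ?_ hαpos
    rw [sub_pos, div_lt_div_iff₀ (by positivity) hcS]
    nlinarith
end
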